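/- Let $F$ be a generalised quadratic form over the ring of integers $\mathfrak{o}$ of a Galois number field $K/\mathbb{Q}$, with coefficient matrix $(c_{i,j,\tau,\tau'})$ regarded as an $nd\times nd$ matrix of rank $\Delta$. Then there exists a constant $C_1>0$, depending only on $F$, such that for every non-zero integral ideal $\mathfrak{b}$ one has $|\mathfrak{o}^n/\mathcal{H}_\mathfrak{b}|\leq C_1(\mathrm{N}\mathfrak{b})^{\Delta}$. Moreover there is an integral ideal $\mathfrak{d}_1$ such that $C_1=1$ works for all $\mathfrak{b}$ coprime to $\mathfrak{d}_1$. -/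

import Mathlib

open NumberField
open scoped BigOperators

/-- The action of `Gal(K/ℚ)` on the ring of integers of `K`. -/
noncomputable def gact (K : Type*) [Field K] [NumberField K]
    (τ : K ≃ₐ[ℚ] K) : (𝓞 K) ≃ₐ[ℤ] (𝓞 K) :=
  galRestrict ℤ ℚ K (𝓞 K) τ

/-- The generalised quadratic form attached to a symmetric coefficient tuple
`c : Fin n → Fin n → Gal(K/ℚ) → Gal(K/ℚ) → 𝓞 K`. -/
noncomputable def gqf {K : Type*} [Field K] [NumberField K] {n : ℕ}
    (c : Fin n → Fin n → (K ≃ₐ[ℚ] K) → (K ≃ₐ[ℚ] K) → 𝓞 K)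
    (x : Fin n → 𝓞 K) : 𝓞 K :=
  ∑ i, ∑ j, ∑ τ : K ≃ₐ[ℚ] K, ∑ τ' : K ≃ₐ[ℚ] K,
    c i j τ τ' * gact K τ (x i) * gact K τ' (x j)

/-- The generalised bilinear form attached to `c`. -/
noncomputable def gbf {K : Type*} [Field K] [NumberField K] {n : ℕ}
    (c : Fin n → Fin n → (K ≃ₐ[ℚ] K) → (K ≃ₐ[ℚ] K) → 𝓞 K)
    (x y : Fin n → 𝓞 K) : 𝓞 K :=
  ∑ i, ∑ j, ∑ τ : K ≃ₐ[ℚ] K, ∑ τ' : K ≃ₐ[ℚ] K,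
    c i j τ τ' * gact K τ (x i) * gact K τ' (y j)

/-- The `G`-invariant ideal `ᴳ𝔟 = ⋂_{τ ∈ G} 𝔟^{τ⁻¹}`. -/
noncomputable def GIdeal {K : Type*} [Field K] [NumberField K]
    (G : Set (K ≃ₐ[ℚ] K)) (𝔟 : Ideal (𝓞 K)) : Ideal (𝓞 K) :=
  ⨅ τ ∈ G, Ideal.map (gact K τ.symm) 𝔟

lemma gbf_add_right {K : Type*} [Field K] [NumberField K] {n : ℕ}
    (c : Fin n → Fin n → (K ≃ₐ[ℚ] K) → (K ≃ₐ[ℚ] K) → 𝓞 K)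
    (a x y : Fin n → 𝓞 K) : gbf c a (x + y) = gbf c a x + gbf c a y := by
  simp [gbf, Pi.add_apply, map_add, mul_add, Finset.sum_add_distrib]

lemma gbf_neg_right {K : Type*} [Field K] [NumberField K] {n : ℕ}
    (c : Fin n → Fin n → (K ≃ₐ[ℚ] K) → (K ≃ₐ[ℚ] K) → 𝓞 K)
    (a x : Fin n → 𝓞 K) : gbf c a (-x) = - gbf c a x := by
  simp [gbf, Pi.neg_apply, map_neg, mul_neg, Finset.sum_neg_distrib]

/-- The subgroup `ℋ_𝔟 = {h ∈ 𝓞ⁿ : 2 B(a; h) ∈ 𝔟 ∀ a}`. -/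
noncomputable def Hsub {K : Type*} [Field K] [NumberField K] {n : ℕ}
    (c : Fin n → Fin n → (K ≃ₐ[ℚ] K) → (K ≃ₐ[ℚ] K) → 𝓞 K)
    (𝔟 : Ideal (𝓞 K)) : AddSubgroup (Fin n → 𝓞 K) where
  carrier := {h | ∀ a, 2 * gbf c a h ∈ 𝔟}
  zero_mem' := by
    intro a
    have : gbf c a (0 : Fin n → 𝓞 K) = 0 := by
      simp [gbf]
    simp [this]
  add_mem' := by
    intro x y hx hy a
    rw [gbf_add_right, mul_add]
    exact Ideal.add_mem _ (hx a) (hy a)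
  neg_mem' := by
    intro x hx a
    rw [gbf_neg_right, mul_neg]
    exact (Ideal.neg_mem_iff _).mpr (hx a)

/-- The subgroup `(ᴳ𝔟)ⁿ ⊆ 𝓞ⁿ`. -/
noncomputable def GIdealPow {K : Type*} [Field K] [NumberField K] (n : ℕ)
    (G : Set (K ≃ₐ[ℚ] K)) (𝔟 : Ideal (𝓞 K)) : AddSubgroup (Fin n → 𝓞 K) :=
  AddSubgroup.pi Set.univ fun _ => (GIdeal G 𝔟).toAddSubgroup

/-!
Write `A` for the coefficient matrix over `𝓞`, `L ⊆ 𝓞^{nd}` for its column module and `w(h)` for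
the vector of Galois conjugates `τ(h_i)`. Since `B(a; h) = ∑_{(i,τ)} τ(a_i) (A w(h))_{(i,τ)}`,
every `h` with `A w(h) ∈ 𝔟 L` lies in `ℋ_𝔟`, so `|𝓞ⁿ/ℋ_𝔟| ≤ |L/𝔟L|`. The module `L` has rank `Δ`
over `𝓞`, and contains a free submodule `F` of rank `Δ` with `𝔡 L ⊆ F` for some ideal `𝔡 ≠ 0`.
Hence `|L/𝔟L| ≤ [L : F] · |F/𝔟F| = [L : F] · N𝔟^Δ`, and if `𝔟 + 𝔡 = 𝓞` then `L = F + 𝔟L`, which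
removes the factor `[L : F]`.
-/

open Module Submodule
open scoped nonZeroDivisors

section General

variable {R M : Type*} [CommRing R] [AddCommGroup M] [Module R M]

theorem AddSubgroup.index_le_of_comap_le {G G' : Type*} [AddGroup G] [AddCommGroup G']
    (f : G →+ G') {H : AddSubgroup G} {B : AddSubgroup G'} (hB : B.index ≠ 0)
    (h : B.comap f ≤ H) : H.index ≤ B.index := by
  have hdvd : (B.comap f).index ∣ B.index := by
    rw [AddSubgroup.index_comap B f]
    exact B.relIndex_dvd_index_of_normal f.range
  have hpos : 0 < (B.comap f).index := Nat.pos_of_ne_zero (ne_zero_of_dvd_ne_zero hB hdvd)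
  exact (Nat.le_of_dvd hpos (AddSubgroup.index_dvd_of_le h)).trans (Nat.le_of_dvd
    (Nat.pos_of_ne_zero hB) hdvd)

theorem Submodule.apply_mem_of_mem_smul_top (I : Ideal R) (f : M →ₗ[R] R) {x : M}
    (hx : x ∈ I • (⊤ : Submodule R M)) : f x ∈ I := by
  have : I • (⊤ : Submodule R M) ≤ Submodule.comap f I := smul_le.mpr fun r hr m _ ↦ by
    rw [mem_comap, LinearMap.map_smul, smul_eq_mul]
    exact I.mul_mem_right (f m) hr
  exact this hx

theorem Submodule.cardQuot_smul_top_le_mul_cardQuot_sup (F : Submodule R M) (I : Ideal R)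
    (hI : cardQuot (I • ⊤ : Submodule R F) ≠ 0) :
    cardQuot (I • ⊤ : Submodule R M) ≤
      cardQuot (I • ⊤ : Submodule R F) * cardQuot (F ⊔ I • ⊤) := by
  set B := (I • ⊤ : Submodule R M).toAddSubgroup
  have hle : (I • ⊤ : Submodule R F).toAddSubgroup ≤ B.addSubgroupOf F.toAddSubgroup := by
    intro x hx
    rw [AddSubgroup.mem_addSubgroupOf]
    exact (smul_mono_right I le_top : I • F ≤ I • ⊤) ((mem_smul_top_iff I F x).mp hx)
  calc cardQuot (I • ⊤ : Submodule R M)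
      = B.relIndex (F.toAddSubgroup ⊔ B) * (F.toAddSubgroup ⊔ B).index :=
        (AddSubgroup.relIndex_mul_index le_sup_right).symm
    _ = B.relIndex F.toAddSubgroup * cardQuot (F ⊔ I • ⊤) := by
        rw [AddSubgroup.relIndex_sup_right, cardQuot, sup_toAddSubgroup]
    _ ≤ cardQuot (I • ⊤ : Submodule R F) * cardQuot (F ⊔ I • ⊤) := by
        gcongr
        exact Nat.le_of_dvd (Nat.pos_of_ne_zero hI) (AddSubgroup.index_dvd_of_le hle)

theorem Module.Free.cardQuot_smul_top [Nontrivial R] [Module.Free R M] [Module.Finite R M]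
    (I : Ideal R) : cardQuot (I • ⊤ : Submodule R M) = cardQuot I ^ finrank R M := by
  let e : (M ⧸ (I • ⊤ : Submodule R M)) ≃ₗ[R] (Fin (finrank R M) → R ⧸ I) :=
    (TensorProduct.quotTensorEquivQuotSMul M I).symm ≪≫ₗ
      (LinearEquiv.lTensor (R ⧸ I) (Module.finBasis R M).equivFun) ≪≫ₗ
      (TensorProduct.piScalarRight R R (R ⧸ I) (Fin (finrank R M)))
  rw [cardQuot_apply, cardQuot_apply, Nat.card_congr e.toEquiv, Nat.card_fun, Nat.card_fin]

theorem Submodule.cardQuot_smul_top_ne_zero [Ring.HasFiniteQuotients R] [Module.Finite R M]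
    {I : Ideal R} (hI : I ≠ ⊥) : cardQuot (I • ⊤ : Submodule R M) ≠ 0 := by
  have : Finite (R ⧸ I) := Ring.HasFiniteQuotients.finiteQuotient hI
  have : Finite (M ⧸ (I • ⊤ : Submodule R M)) := Module.finite_of_finite (R ⧸ I)
  rw [cardQuot_apply]
  exact Nat.card_pos.ne'

theorem Matrix.rank_map_algebraMap {K m n : Type*} [IsDomain R] [Field K] [Algebra R K]
    [IsFractionRing R K] [Finite m] [Fintype n] (A : Matrix m n R) :
    (A.map (algebraMap R K)).rank = A.rank := by
  let f : (m → R) →ₗ[R] (m → K) := .pi fun i ↦ Algebra.linearMap R K ∘ₗ .proj i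
  have hrange : LinearMap.range (A.map (algebraMap R K)).mulVecLin =
      (LinearMap.range A.mulVecLin).localized' K R⁰ f := by
    rw [Matrix.range_mulVecLin, Matrix.range_mulVecLin, localized'_span, ← Set.range_comp]
    rfl
  rw [Matrix.rank, Matrix.rank, hrange, IsLocalization.finrank_eq K R⁰ le_rfl,
    IsLocalizedModule.finrank_eq R⁰ ((LinearMap.range A.mulVecLin).toLocalized' K R⁰ f) le_rfl]

variable (R M) in
theorem Module.exists_free_submodule_smul_top_le [IsDomain R] [Module.Finite R M] :
    ∃ (F : Submodule R M) (d : Ideal R), Module.Free R F ∧ finrank R F = finrank R M ∧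
      d ≠ ⊥ ∧ d • ⊤ ≤ F := by
  obtain ⟨s, hcard, hs⟩ := exists_set_linearIndependent_of_isDomain R M
  have hfree : Module.Free R (span R s) := by
    have := Module.Free.of_basis (Basis.span hs.linearIndependent)
    rwa [show Set.range (fun x : s ↦ id (x : M)) = s from Subtype.range_coe] at this
  have hrank : finrank R (span R s) = finrank R M := by
    simp only [finrank, rank_span_set hs, hcard]
  have htorsion : IsTorsion R (M ⧸ span R s) := by
    rw [← finrank_eq_zero_iff_isTorsion]
    have := (span R s).finrank_quotient_add_finrank
    omega
  obtain ⟨D, hDann, hD⟩ := annihilator_top_inter_nonZeroDivisors htorsion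
  rw [SetLike.mem_coe, annihilator_top, Module.mem_annihilator] at hDann
  refine ⟨span R s, Ideal.span {D}, hfree, hrank, ?_, smul_le.mpr ?_⟩
  · simpa [Ideal.span_singleton_eq_bot] using nonZeroDivisors.ne_zero hD
  · rintro r hr x -
    obtain ⟨a, rfl⟩ := Ideal.mem_span_singleton'.mp hr
    rw [mul_smul, ← Submodule.Quotient.mk_eq_zero, Submodule.Quotient.mk_smul,
      Submodule.Quotient.mk_smul, hDann, smul_zero]

variable (R M) in
theorem Module.exists_cardQuot_smul_top_le [IsDomain R] [Ring.HasFiniteQuotients R]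
    [Module.Finite R M] :
    ∃ (C : ℕ) (d : Ideal R), 0 < C ∧ d ≠ ⊥ ∧
      (∀ I : Ideal R, I ≠ ⊥ →
        cardQuot (I • ⊤ : Submodule R M) ≤ C * cardQuot I ^ finrank R M) ∧
      (∀ I : Ideal R, I ≠ ⊥ → I ⊔ d = ⊤ →
        cardQuot (I • ⊤ : Submodule R M) ≤ cardQuot I ^ finrank R M) := by
  obtain ⟨F, d, hfree, hrank, hd, hdF⟩ := exists_free_submodule_smul_top_le R M
  have key (I : Ideal R) (hI : I ≠ ⊥) :
      cardQuot (I • ⊤ : Submodule R M) ≤ cardQuot I ^ finrank R M * cardQuot (F ⊔ I • ⊤) := by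
    have hF : cardQuot (I • ⊤ : Submodule R F) = cardQuot I ^ finrank R M := by
      rw [Module.Free.cardQuot_smul_top, hrank]
    rw [← hF]
    exact F.cardQuot_smul_top_le_mul_cardQuot_sup I
      (hF ▸ pow_ne_zero _ (Ring.HasFiniteQuotients.cardQuot_pos I hI).ne')
  have hFpos : 0 < cardQuot F := Nat.pos_of_ne_zero <|
    ne_zero_of_dvd_ne_zero (cardQuot_smul_top_ne_zero hd) (AddSubgroup.index_dvd_of_le hdF)
  refine ⟨cardQuot F, d, hFpos, hd, fun I hI ↦ (key I hI).trans ?_, fun I hI hId ↦ ?_⟩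
  · rw [mul_comm]
    gcongr
    exact Nat.le_of_dvd hFpos
      (AddSubgroup.index_dvd_of_le ((toAddSubgroup_le _ _).mpr le_sup_left))
  · have htop : F ⊔ I • ⊤ = ⊤ := top_le_iff.mp <|
      calc ⊤ = (I ⊔ d) • (⊤ : Submodule R M) := by rw [hId, top_smul]
        _ = I • ⊤ ⊔ d • ⊤ := sup_smul ..
        _ ≤ F ⊔ I • ⊤ := sup_le le_sup_right (hdF.trans le_sup_left)
    simpa [htop] using key I hI

end General

section Form

open scoped Matrix

variable {K : Type*} [Field K] [NumberField K] {n : ℕ}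
  (c : Fin n → Fin n → (K ≃ₐ[ℚ] K) → (K ≃ₐ[ℚ] K) → 𝓞 K)

noncomputable def coeffMatrix : Matrix (Fin n × (K ≃ₐ[ℚ] K)) (Fin n × (K ≃ₐ[ℚ] K)) (𝓞 K) :=
  Matrix.of fun p q ↦ c p.1 q.1 p.2 q.2

noncomputable abbrev columnModule : Submodule (𝓞 K) (Fin n × (K ≃ₐ[ℚ] K) → 𝓞 K) :=
  LinearMap.range (coeffMatrix c).mulVecLin

noncomputable def galConjugates : (Fin n → 𝓞 K) →+ (Fin n × (K ≃ₐ[ℚ] K) → 𝓞 K) :=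
  AddMonoidHom.pi fun q ↦ (gact K q.2 : 𝓞 K →+ 𝓞 K).comp (Pi.evalAddMonoidHom _ q.1)

theorem gbf_eq_sum_mul_mulVec (a h : Fin n → 𝓞 K) :
    gbf c a h = ∑ p, gact K p.2 (a p.1) * (coeffMatrix c *ᵥ galConjugates h) p := by
  simp only [gbf, Matrix.mulVec, dotProduct, coeffMatrix, galConjugates, Matrix.of_apply,
    Fintype.sum_prod_type, Finset.mul_sum, AddMonoidHom.pi_apply, AddMonoidHom.comp_apply,
    Pi.evalAddMonoidHom_apply, AddMonoidHom.coe_coe]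
  refine Finset.sum_congr rfl fun i _ ↦ ?_
  rw [Finset.sum_comm]
  refine Finset.sum_congr rfl fun j _ ↦ Finset.sum_congr rfl fun τ _ ↦
    Finset.sum_congr rfl fun τ' _ ↦ ?_
  ring

theorem index_Hsub_le_cardQuot {𝔟 : Ideal (𝓞 K)} (h𝔟 : 𝔟 ≠ ⊥) :
    (Hsub c 𝔟).index ≤ cardQuot (𝔟 • ⊤ : Submodule (𝓞 K) (columnModule c)) := by
  refine AddSubgroup.index_le_of_comap_le
    ((coeffMatrix c).mulVecLin.rangeRestrict.toAddMonoidHom.comp galConjugates)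
    (cardQuot_smul_top_ne_zero h𝔟) fun h hh a ↦ ?_
  rw [gbf_eq_sum_mul_mulVec, Finset.mul_sum]
  refine Ideal.sum_mem _ fun p _ ↦ Ideal.mul_mem_left _ _ (Ideal.mul_mem_left _ _ ?_)
  exact apply_mem_of_mem_smul_top 𝔟 (LinearMap.proj p ∘ₗ (columnModule c).subtype) hh

end Form

theorem index_H_le_norm_pow_rank_general
    (K : Type*) [Field K] [NumberField K] (n : ℕ)
    (c : Fin n → Fin n → (K ≃ₐ[ℚ] K) → (K ≃ₐ[ℚ] K) → 𝓞 K) :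
    ∃ C₁ : ℕ, 0 < C₁ ∧
      (∀ 𝔟 : Ideal (𝓞 K), 𝔟 ≠ ⊥ →
        (Hsub c 𝔟).index ≤
          C₁ * Ideal.absNorm 𝔟 ^
            (Matrix.rank (Matrix.of
              (fun p q : Fin n × (K ≃ₐ[ℚ] K) =>
                ((c p.1 q.1 p.2 q.2 : K)))))) ∧
      (∃ 𝔡₁ : Ideal (𝓞 K), 𝔡₁ ≠ ⊥ ∧
        ∀ 𝔟 : Ideal (𝓞 K), 𝔟 ≠ ⊥ → 𝔟 + 𝔡₁ = ⊤ →
          (Hsub c 𝔟).index ≤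
            Ideal.absNorm 𝔟 ^
              (Matrix.rank (Matrix.of
                (fun p q : Fin n × (K ≃ₐ[ℚ] K) =>
                  ((c p.1 q.1 p.2 q.2 : K)))))) := by
  -- The coercion `𝓞 K → K` is `algebraMap`, so this is `(coeffMatrix c).map (algebraMap _ K)`.
  have hrank : Matrix.rank (Matrix.of fun p q : Fin n × (K ≃ₐ[ℚ] K) ↦ (c p.1 q.1 p.2 q.2 : K)) =
      finrank (𝓞 K) (columnModule c) :=
    (coeffMatrix c).rank_map_algebraMap
  obtain ⟨C, d, hC, hd, hbound, hcoprime⟩ := exists_cardQuot_smul_top_le (𝓞 K) (columnModule c)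
  refine ⟨C, hC, fun 𝔟 h𝔟 ↦ ?_, d, hd, fun 𝔟 h𝔟 h𝔟d ↦ ?_⟩
  · rw [hrank, Ideal.absNorm_apply]
    exact (index_Hsub_le_cardQuot c h𝔟).trans (hbound 𝔟 h𝔟)
  · rw [hrank, Ideal.absNorm_apply]
    exact (index_Hsub_le_cardQuot c h𝔟).trans (hcoprime 𝔟 h𝔟 h𝔟d)

/-- Let `F` be a generalised quadratic form over `𝓞 K`, with
coefficient matrix of rank `Δ` (as an `nd × nd` matrix over `K`).  Then there
is a constant `C₁ > 0`, depending only on `F`, with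
`|𝓞ⁿ/ℋ_𝔟| ≤ C₁ (N𝔟)^Δ` for every non-zero integral ideal `𝔟`; moreover there
is a non-zero integral ideal `𝔡₁` such that `C₁ = 1` works for all `𝔟`
coprime to `𝔡₁`. -/
theorem index_H_le_norm_pow_rank
    (K : Type*) [Field K] [NumberField K] [IsGalois ℚ K] (n : ℕ)
    (c : Fin n → Fin n → (K ≃ₐ[ℚ] K) → (K ≃ₐ[ℚ] K) → 𝓞 K)
    (hsym : ∀ i j τ τ', c i j τ τ' = c j i τ' τ) :
    ∃ C₁ : ℕ, 0 < C₁ ∧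
      (∀ 𝔟 : Ideal (𝓞 K), 𝔟 ≠ ⊥ →
        (Hsub c 𝔟).index ≤
          C₁ * Ideal.absNorm 𝔟 ^
            (Matrix.rank (Matrix.of
              (fun p q : Fin n × (K ≃ₐ[ℚ] K) =>
                ((c p.1 q.1 p.2 q.2 : K)))))) ∧
      (∃ 𝔡₁ : Ideal (𝓞 K), 𝔡₁ ≠ ⊥ ∧
        ∀ 𝔟 : Ideal (𝓞 K), 𝔟 ≠ ⊥ → 𝔟 + 𝔡₁ = ⊤ →
          (Hsub c 𝔟).index ≤
            Ideal.absNorm 𝔟 ^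
              (Matrix.rank (Matrix.of
                (fun p q : Fin n × (K ≃ₐ[ℚ] K) =>
                  ((c p.1 q.1 p.2 q.2 : K)))))) :=
  index_H_le_norm_pow_rank_general K n c
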